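/- There exists η > 0 with the following property. Let y* ∈ [2,3], ρ₀ ≥ 1/3, and set Z = η·ρ₀^{−3/4}. Let ρ, ω : [0, Z] → ℝ be continuous, differentiable on (0, Z], solve the system there, and satisfy for all z ∈ (0, Z]: 1/3 < ω(z), ω(z)² ≤ ρ₀/3, ω(z) < ρ(z) < ρ₀, and ρ(z)·ω(z) ≤ ρ₀/3 (these bounds imply 1 − y*²z²ω(z)² ≥ 1/2 on (0,Z]). Let P, W : [0, Z] → ℝ be continuously differentiable with P(0) = 1, W(0) = 0, solving for z ∈ (0, Z] the variational system: W' = −(3/z)·W + [4y*²zω(ρ−ω)/(1 − y*²z²ω²)²]·W − [2y*²zω²/(1 − y*²z²ω²)]·W + [2y*²zω²/(1 − y*²z²ω²)]·P, and P' = −[2y*²zω(ρ−ω)/(1 − y*²z²ω²) + 2y*²zωρ/(1 − y*²z²ω²)]·P − [2y*²z(ρ−ω)ρ/(1 − y*²z²ω²) − 2y*²zωρ/(1 − y*²z²ω²) + 4y*⁴z³ω²ρ(ρ−ω)/(1 − y*²z²ω²)²]·W. Then P(z) > 0 for all z ∈ [0, Z]. -/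

import Mathlib

/-! Along the flow, the energy `E = (P - 1)² + ρ₀ W² + 1` satisfies
`E' ≤ (96 ρ₀ z + 6912 ρ₀³ z³) E`: every coefficient of the variational system is `O(z ρ₀)`
(or `O(z ρ₀²)` in front of `W` in `P'`), and the singular damping `-3W/z` absorbs the cross
terms between `P` and `W` by AM–GM. Grönwall's inequality with the rate `K` frozen at `z = Z`
gives `E ≤ exp (K Z)`, and `K Z = O(Z² ρ₀ + Z⁴ ρ₀³)` is tiny when `Z = η ρ₀^{-3/4}`;
hence `(P - 1)² < 1`. -/

/-- The rescaled self-similar isothermal Euler–Poisson system with parameter `y = y*`,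
at the point `z`. -/
def EPSys (y : ℝ) (ρ ω : ℝ → ℝ) (z : ℝ) : Prop :=
  deriv ρ z =
    -(2 * y ^ 2 * z * ω z * ρ z * (ρ z - ω z)) / (1 - y ^ 2 * z ^ 2 * (ω z) ^ 2) ∧
  deriv ω z =
    (1 - 3 * ω z) / z +
      2 * y ^ 2 * z * (ω z) ^ 2 * (ρ z - ω z) / (1 - y ^ 2 * z ^ 2 * (ω z) ^ 2)

open Set Real

def energy (ρ₀ p w : ℝ) : ℝ := (p - 1) ^ 2 + ρ₀ * w ^ 2 + 1

theorem le_mul_exp_of_hasDerivAt_le_mul {f f' : ℝ → ℝ} {K a b : ℝ}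
    (hf : ContinuousOn f (Icc a b)) (hf' : ∀ x ∈ Ioo a b, HasDerivAt f (f' x) x)
    (hbound : ∀ x ∈ Ioo a b, f' x ≤ K * f x) {x : ℝ} (hx : x ∈ Icc a b) :
    f x ≤ f a * exp (K * (x - a)) := by
  set g : ℝ → ℝ := fun t ↦ f t * exp (K * (a - t)) with hg
  have hg' : ∀ t ∈ Ioo a b, HasDerivAt g ((f' t - K * f t) * exp (K * (a - t))) t := by
    intro t ht
    have hexp := (((hasDerivAt_id' t).const_sub a).const_mul K).exp
    exact ((hf' t ht).mul hexp).congr_deriv (by ring)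
  have hanti : AntitoneOn g (Icc a b) := by
    refine antitoneOn_of_deriv_nonpos (convex_Icc a b) (hf.mul (by fun_prop)) ?_ ?_ <;>
      rw [interior_Icc]
    · exact fun t ht ↦ (hg' t ht).differentiableAt.differentiableWithinAt
    · intro t ht
      rw [(hg' t ht).deriv]
      exact mul_nonpos_of_nonpos_of_nonneg (sub_nonpos.mpr (hbound t ht)) (exp_nonneg _)
  have hga : g x ≤ f a := by
    simpa [hg] using hanti (left_mem_Icc.mpr (hx.1.trans hx.2)) hx hx.1
  calc f x = g x * exp (K * (x - a)) := by
        simp only [hg, mul_assoc, ← exp_add, ← mul_add, sub_add_sub_cancel', sub_self, mul_zero,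
          exp_zero, mul_one]
    _ ≤ f a * exp (K * (x - a)) := by gcongr

theorem two_mul_le_mul_sq_add_sq_div {s c w : ℝ} (hs : 0 < s) :
    2 * c * w ≤ s * w ^ 2 + c ^ 2 / s := by
  have hsq : s * w ^ 2 + c ^ 2 / s - 2 * c * w = (s * w - c) ^ 2 / s := by field_simp; ring
  linarith [div_nonneg (sq_nonneg (s * w - c)) hs.le]

theorem damped_linear_energy_rate_le {z ρ₀ M a b e g p w : ℝ} (hz : 0 < z) (hρ₀ : 0 < ρ₀)
    (ha₀ : 0 ≤ a) (ha : a ≤ M * z * ρ₀) (hb : |b| ≤ M * z * ρ₀ ^ 2) (he : e ≤ M * z * ρ₀)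
    (hg : |g| ≤ M * z * ρ₀) :
    2 * (p - 1) * (-a * p - b * w) + 2 * ρ₀ * w * (-(3 / z) * w + e * w + g * p) ≤
      (2 * M * z * ρ₀ + 3 * M ^ 2 * z ^ 3 * ρ₀ ^ 3) * energy ρ₀ p w := by
  unfold energy
  have hM : 0 ≤ M * z * ρ₀ := ha₀.trans ha
  have hw : 0 ≤ ρ₀ * w ^ 2 := by positivity
  have hs : 0 < ρ₀ / z := div_pos hρ₀ hz
  have hb2 : b ^ 2 ≤ (M * z * ρ₀ ^ 2) ^ 2 := sq_le_sq' (abs_le.mp hb).1 (abs_le.mp hb).2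
  have hg2 : g ^ 2 ≤ (M * z * ρ₀) ^ 2 := sq_le_sq' (abs_le.mp hg).1 (abs_le.mp hg).2
  have hdamp : 2 * ρ₀ * w * (-(3 / z) * w) = -6 * (ρ₀ / z * w ^ 2) := by ring
  have hpp : -2 * a * (p - 1) * p ≤ M * z * ρ₀ := by nlinarith [sq_nonneg (2 * p - 1)]
  have hpw : -2 * b * (p - 1) * w ≤ ρ₀ / z * w ^ 2 + M ^ 2 * z ^ 3 * ρ₀ ^ 3 * (p - 1) ^ 2 := by
    have hc : (-b * (p - 1)) ^ 2 / (ρ₀ / z) ≤ M ^ 2 * z ^ 3 * ρ₀ ^ 3 * (p - 1) ^ 2 := by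
      rw [div_le_iff₀ hs]
      calc (-b * (p - 1)) ^ 2 = b ^ 2 * (p - 1) ^ 2 := by ring
        _ ≤ (M * z * ρ₀ ^ 2) ^ 2 * (p - 1) ^ 2 := by gcongr
        _ = _ := by field_simp
    linarith [two_mul_le_mul_sq_add_sq_div (c := -b * (p - 1)) (w := w) hs]
  have hww : 2 * ρ₀ * e * w ^ 2 ≤ 2 * M * z * ρ₀ * (ρ₀ * w ^ 2) := by
    nlinarith [mul_le_mul_of_nonneg_right he hw]
  have hwp : 2 * ρ₀ * g * w * p ≤
      ρ₀ / z * w ^ 2 + 2 * M ^ 2 * z ^ 3 * ρ₀ ^ 3 * ((p - 1) ^ 2 + 1) := by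
    have hc : (ρ₀ * g * p) ^ 2 / (ρ₀ / z) ≤ 2 * M ^ 2 * z ^ 3 * ρ₀ ^ 3 * ((p - 1) ^ 2 + 1) := by
      have hp : p ^ 2 ≤ 2 * ((p - 1) ^ 2 + 1) := by nlinarith [sq_nonneg (p - 2)]
      rw [div_le_iff₀ hs]
      calc (ρ₀ * g * p) ^ 2 = ρ₀ ^ 2 * g ^ 2 * p ^ 2 := by ring
        _ ≤ ρ₀ ^ 2 * (M * z * ρ₀) ^ 2 * (2 * ((p - 1) ^ 2 + 1)) := by gcongr
        _ = _ := by field_simp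
    linarith [two_mul_le_mul_sq_add_sq_div (c := ρ₀ * g * p) (w := w) hs]
  nlinarith [mul_nonneg hM (sq_nonneg (p - 1)), mul_nonneg hs.le (sq_nonneg w),
    mul_nonneg (mul_nonneg (sq_nonneg M) (pow_nonneg hz.le 3)) (pow_nonneg hρ₀.le 3)]

theorem coeff_bounds_of_half_le {y z X x D : ℝ} (hy₀ : 0 ≤ y) (hy : y ≤ 3) (hz : 0 ≤ z)
    (hX₀ : 0 ≤ X) (hX : X ≤ x) (hD : 1 / 2 ≤ D) :
    0 ≤ y ^ 2 * z * X / D ∧ y ^ 2 * z * X / D ≤ 18 * z * x ∧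
      0 ≤ y ^ 2 * z * X / D ^ 2 ∧ y ^ 2 * z * X / D ^ 2 ≤ 36 * z * x := by
  have hD₀ : 0 < D := by linarith
  have hzx : 0 ≤ 3 ^ 2 * z * x := mul_nonneg (by positivity) (hX₀.trans hX)
  refine ⟨by positivity, ?_, by positivity, ?_⟩
  · calc y ^ 2 * z * X / D ≤ 3 ^ 2 * z * x / (1 / 2) := by gcongr
      _ = 18 * z * x := by ring
  · calc y ^ 2 * z * X / D ^ 2 ≤ 3 ^ 2 * z * x / (1 / 2) ^ 2 := by gcongr
      _ = 36 * z * x := by ring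

noncomputable def variationalRhsW (y z ρ ω p w : ℝ) : ℝ :=
  -(3 / z) * w
    + (4 * y ^ 2 * z * ω * (ρ - ω) / (1 - y ^ 2 * z ^ 2 * ω ^ 2) ^ 2) * w
    - (2 * y ^ 2 * z * ω ^ 2 / (1 - y ^ 2 * z ^ 2 * ω ^ 2)) * w
    + (2 * y ^ 2 * z * ω ^ 2 / (1 - y ^ 2 * z ^ 2 * ω ^ 2)) * p

noncomputable def variationalRhsP (y z ρ ω p w : ℝ) : ℝ :=
  -(2 * y ^ 2 * z * ω * (ρ - ω) / (1 - y ^ 2 * z ^ 2 * ω ^ 2)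
      + 2 * y ^ 2 * z * ω * ρ / (1 - y ^ 2 * z ^ 2 * ω ^ 2)) * p
    - (2 * y ^ 2 * z * (ρ - ω) * ρ / (1 - y ^ 2 * z ^ 2 * ω ^ 2)
      - 2 * y ^ 2 * z * ω * ρ / (1 - y ^ 2 * z ^ 2 * ω ^ 2)
      + 4 * y ^ 4 * z ^ 3 * ω ^ 2 * ρ * (ρ - ω) / (1 - y ^ 2 * z ^ 2 * ω ^ 2) ^ 2) * w

theorem sq_mul_sq_mul_sq_le_of_small {y z ρ₀ ω : ℝ} (hy₀ : 0 ≤ y) (hy : y ≤ 3)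
    (hsmall : z ^ 2 * ρ₀ ≤ 1 / 36) (hω₂ : ω ^ 2 ≤ ρ₀ / 3) : y ^ 2 * z ^ 2 * ω ^ 2 ≤ 1 / 12 := by
  have : y ^ 2 * z ^ 2 * ω ^ 2 ≤ 3 ^ 2 * z ^ 2 * (ρ₀ / 3) := by gcongr
  linarith

theorem variational_energy_rate_le {y z ρ₀ ρ ω p w : ℝ} (hy₀ : 0 ≤ y) (hy : y ≤ 3) (hz : 0 < z)
    (hsmall : z ^ 2 * ρ₀ ≤ 1 / 36) (hω : 0 ≤ ω) (hω₂ : ω ^ 2 ≤ ρ₀ / 3) (hωρ : ω < ρ)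
    (hρ : ρ < ρ₀) (hρω : ρ * ω ≤ ρ₀ / 3) :
    2 * (p - 1) * variationalRhsP y z ρ ω p w + ρ₀ * (2 * w * variationalRhsW y z ρ ω p w) ≤
      (96 * z * ρ₀ + 6912 * z ^ 3 * ρ₀ ^ 3) * energy ρ₀ p w := by
  have hρ₀ : 0 < ρ₀ := by linarith
  have hd : 0 ≤ ρ - ω := by linarith
  have hρ_nonneg : 0 ≤ ρ := by linarith
  have hρd : 0 ≤ ρ * (ρ - ω) := mul_nonneg hρ_nonneg hd
  have hsonic := sq_mul_sq_mul_sq_le_of_small hy₀ hy hsmall hω₂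
  have hD : 1 / 2 ≤ 1 - y ^ 2 * z ^ 2 * ω ^ 2 := by linarith
  have hρρ : ρ * (ρ - ω) ≤ ρ₀ ^ 2 := by nlinarith
  obtain ⟨hA₀, hA, -, hE⟩ := coeff_bounds_of_half_le (X := ω * (ρ - ω)) (x := ρ₀ / 3) hy₀ hy
    hz.le (mul_nonneg hω hd) (by nlinarith) hD
  obtain ⟨hB₀, hB, -, -⟩ := coeff_bounds_of_half_le (X := ω * ρ) (x := ρ₀ / 3) hy₀ hy hz.le
    (mul_nonneg hω hρ_nonneg) (by linarith) hD
  obtain ⟨-, hB', -, -⟩ := coeff_bounds_of_half_le (X := ω * ρ) (x := ρ₀ ^ 2) hy₀ hy hz.le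
    (mul_nonneg hω hρ_nonneg) (by nlinarith) hD
  obtain ⟨hC₀, hC, -, -⟩ := coeff_bounds_of_half_le (X := ρ * (ρ - ω)) (x := ρ₀ ^ 2) hy₀ hy
    hz.le hρd hρρ hD
  obtain ⟨hG₀, hG, -, -⟩ := coeff_bounds_of_half_le (X := ω ^ 2) (x := ρ₀ / 3) hy₀ hy hz.le
    (by positivity) hω₂ hD
  obtain ⟨-, -, hK₀, hK⟩ :=
    coeff_bounds_of_half_le (X := y ^ 2 * z ^ 2 * ω ^ 2 * (ρ * (ρ - ω))) (x := 1 / 12 * ρ₀ ^ 2)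
      hy₀ hy hz.le (mul_nonneg (by positivity) hρd)
      (mul_le_mul hsonic hρρ hρd (by norm_num)) hD
  set cA := y ^ 2 * z * (ω * (ρ - ω)) / (1 - y ^ 2 * z ^ 2 * ω ^ 2) with hcA
  set cE := y ^ 2 * z * (ω * (ρ - ω)) / (1 - y ^ 2 * z ^ 2 * ω ^ 2) ^ 2 with hcE
  set cB := y ^ 2 * z * (ω * ρ) / (1 - y ^ 2 * z ^ 2 * ω ^ 2) with hcB
  set cC := y ^ 2 * z * (ρ * (ρ - ω)) / (1 - y ^ 2 * z ^ 2 * ω ^ 2) with hcC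
  set cG := y ^ 2 * z * ω ^ 2 / (1 - y ^ 2 * z ^ 2 * ω ^ 2) with hcG
  set cK := y ^ 2 * z * (y ^ 2 * z ^ 2 * ω ^ 2 * (ρ * (ρ - ω))) / (1 - y ^ 2 * z ^ 2 * ω ^ 2) ^ 2
    with hcK
  have hzρ₀ : 0 ≤ z * ρ₀ := by positivity
  have hzρ₀' : 0 ≤ z * ρ₀ ^ 2 := by positivity
  have key := damped_linear_energy_rate_le (M := 48) (p := p) (w := w) (a := 2 * cA + 2 * cB)
    (b := 2 * cC - 2 * cB + 4 * cK) (e := 4 * cE - 2 * cG) (g := 2 * cG) hz hρ₀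
    (by positivity) (by linarith) (abs_le.mpr ⟨by linarith, by linarith⟩) (by linarith)
    (by rw [abs_of_nonneg (by positivity)]; linarith)
  calc _ = 2 * (p - 1) * (-(2 * cA + 2 * cB) * p - (2 * cC - 2 * cB + 4 * cK) * w)
        + 2 * ρ₀ * w * (-(3 / z) * w + (4 * cE - 2 * cG) * w + 2 * cG * p) := by
        simp only [variationalRhsP, variationalRhsW, hcA, hcB, hcC, hcE, hcG, hcK]
        ring
    _ ≤ _ := key
    _ = _ := by ring

theorem rpow_neg_three_div_four_pow_four_mul {ρ₀ : ℝ} (hρ₀ : 0 < ρ₀) :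
    (ρ₀ ^ (-(3 : ℝ) / 4)) ^ 4 * ρ₀ ^ 3 = 1 := by
  rw [← rpow_natCast, ← rpow_mul hρ₀.le, ← rpow_natCast, ← rpow_add hρ₀]
  norm_num

theorem small_scale_bounds {ρ₀ Z : ℝ} (hρ₀ : 1 / 3 ≤ ρ₀)
    (hZ : Z = 1 / 100 * ρ₀ ^ (-(3 : ℝ) / 4)) :
    Z ^ 2 * ρ₀ ≤ 1 / 36 ∧ (96 * Z * ρ₀ + 6912 * Z ^ 3 * ρ₀ ^ 3) * Z < log 2 := by
  have h₄ : Z ^ 4 * ρ₀ ^ 3 = 1 / 100 ^ 4 := by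
    rw [hZ, mul_pow, mul_assoc, rpow_neg_three_div_four_pow_four_mul (by linarith)]
    norm_num
  have h₂ : Z ^ 2 * ρ₀ ≤ 1 / 5000 := by
    have : (Z ^ 2 * ρ₀) ^ 2 ≤ 3 / 100 ^ 4 := by nlinarith [sq_nonneg (Z ^ 2 * ρ₀)]
    nlinarith [sq_nonneg (Z ^ 2 * ρ₀)]
  refine ⟨by linarith, ?_⟩
  calc (96 * Z * ρ₀ + 6912 * Z ^ 3 * ρ₀ ^ 3) * Z
      = 96 * (Z ^ 2 * ρ₀) + 6912 * (Z ^ 4 * ρ₀ ^ 3) := by ring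
    _ < log 2 := by rw [h₄]; linarith [log_two_gt_d9]

theorem hasDerivAt_energy {P W : ℝ → ℝ} {ρ₀ x p' w' : ℝ} (hP : HasDerivAt P p' x)
    (hW : HasDerivAt W w' x) :
    HasDerivAt (fun t ↦ energy ρ₀ (P t) (W t)) (2 * (P x - 1) * p' + ρ₀ * (2 * W x * w')) x := by
  have := (((hP.sub_const 1).pow 2).add ((hW.pow 2).const_mul ρ₀)).add_const 1
  exact this.congr_deriv (by push_cast; ring)

/-- Positivity of the variation `P = ∂_{ρ₀}ρ` on the spatial scale `z ≲ ρ₀^{-3/4}`: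
monotonicity of the left solution in its initial density. -/
theorem variation_positive_on_small_scale :
    ∃ η : ℝ, 0 < η ∧
      ∀ (y ρ₀ : ℝ), y ∈ Set.Icc (2 : ℝ) 3 → 1 / 3 ≤ ρ₀ →
      ∀ Z : ℝ, Z = η * ρ₀ ^ (-(3 : ℝ) / 4) →
      ∀ ρ ω P W : ℝ → ℝ,
        ContinuousOn ρ (Set.Icc 0 Z) → ContinuousOn ω (Set.Icc 0 Z) →
        (∀ z ∈ Set.Ioc (0 : ℝ) Z,
          DifferentiableAt ℝ ρ z ∧ DifferentiableAt ℝ ω z ∧ EPSys y ρ ω z) →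
        (∀ z ∈ Set.Ioc (0 : ℝ) Z,
          1 / 3 < ω z ∧ (ω z) ^ 2 ≤ ρ₀ / 3 ∧ ω z < ρ z ∧ ρ z < ρ₀ ∧
          ρ z * ω z ≤ ρ₀ / 3) →
        ContinuousOn P (Set.Icc 0 Z) → ContinuousOn W (Set.Icc 0 Z) →
        P 0 = 1 → W 0 = 0 →
        (∀ z ∈ Set.Ioc (0 : ℝ) Z,
          DifferentiableAt ℝ P z ∧ DifferentiableAt ℝ W z ∧
          deriv W z =
            -(3 / z) * W z
              + (4 * y ^ 2 * z * ω z * (ρ z - ω z) /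
                  (1 - y ^ 2 * z ^ 2 * (ω z) ^ 2) ^ 2) * W z
              - (2 * y ^ 2 * z * (ω z) ^ 2 /
                  (1 - y ^ 2 * z ^ 2 * (ω z) ^ 2)) * W z
              + (2 * y ^ 2 * z * (ω z) ^ 2 /
                  (1 - y ^ 2 * z ^ 2 * (ω z) ^ 2)) * P z ∧
          deriv P z =
            -(2 * y ^ 2 * z * ω z * (ρ z - ω z) /
                  (1 - y ^ 2 * z ^ 2 * (ω z) ^ 2)
                + 2 * y ^ 2 * z * ω z * ρ z /
                  (1 - y ^ 2 * z ^ 2 * (ω z) ^ 2)) * P z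
              - (2 * y ^ 2 * z * (ρ z - ω z) * ρ z /
                  (1 - y ^ 2 * z ^ 2 * (ω z) ^ 2)
                - 2 * y ^ 2 * z * ω z * ρ z /
                  (1 - y ^ 2 * z ^ 2 * (ω z) ^ 2)
                + 4 * y ^ 4 * z ^ 3 * (ω z) ^ 2 * ρ z * (ρ z - ω z) /
                  (1 - y ^ 2 * z ^ 2 * (ω z) ^ 2) ^ 2) * W z) →
        ∀ z ∈ Set.Icc (0 : ℝ) Z, 0 < P z := by
  refine ⟨1 / 100, by norm_num, ?_⟩
  intro y ρ₀ hy hρ₀ Z hZ ρ ω P W _ _ _ hbounds hPc hWc hP0 hW0 hvar z hz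
  obtain ⟨hZ₂, hKZ⟩ := small_scale_bounds hρ₀ hZ
  have hderiv : ∀ x ∈ Ioo 0 Z, HasDerivAt (fun t ↦ energy ρ₀ (P t) (W t))
      (2 * (P x - 1) * deriv P x + ρ₀ * (2 * W x * deriv W x)) x := fun x hx ↦
    hasDerivAt_energy (hvar x (Ioo_subset_Ioc_self hx)).1.hasDerivAt
      (hvar x (Ioo_subset_Ioc_self hx)).2.1.hasDerivAt
  have hrate : ∀ x ∈ Ioo 0 Z, 2 * (P x - 1) * deriv P x + ρ₀ * (2 * W x * deriv W x) ≤
      (96 * Z * ρ₀ + 6912 * Z ^ 3 * ρ₀ ^ 3) * energy ρ₀ (P x) (W x) := by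
    rintro x ⟨hx₀, hxZ⟩
    obtain ⟨-, -, hW', hP'⟩ := hvar x ⟨hx₀, hxZ.le⟩
    obtain ⟨hω, hω₂, hωρ, hρ, hρω⟩ := hbounds x ⟨hx₀, hxZ.le⟩
    have hx₂ : x ^ 2 * ρ₀ ≤ 1 / 36 := by nlinarith
    rw [hP', hW']
    have hE₀ : 0 ≤ energy ρ₀ (P x) (W x) := by unfold energy; positivity
    calc _ ≤ (96 * x * ρ₀ + 6912 * x ^ 3 * ρ₀ ^ 3) * energy ρ₀ (P x) (W x) :=
          variational_energy_rate_le (by linarith [hy.1]) hy.2 hx₀ hx₂ (by linarith) hω₂ hωρ hρ hρω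
      _ ≤ _ := by have := hxZ.le; gcongr
  have hE := le_mul_exp_of_hasDerivAt_le_mul (by unfold energy; fun_prop) hderiv hrate hz
  have hexp : exp ((96 * Z * ρ₀ + 6912 * Z ^ 3 * ρ₀ ^ 3) * (z - 0)) < 2 := by
    have hρ₀' : 0 ≤ ρ₀ := by linarith
    have hZ₀ : 0 ≤ Z := hz.1.trans hz.2
    have hKz : (96 * Z * ρ₀ + 6912 * Z ^ 3 * ρ₀ ^ 3) * (z - 0) < log 2 :=
      lt_of_le_of_lt (by gcongr; linarith [hz.2]) hKZ
    exact (exp_lt_exp.mpr hKz).trans_eq (exp_log two_pos)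
  simp only [energy, hP0, hW0] at hE
  nlinarith [sq_nonneg (W z)]
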